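/- arXiv:2508.10435 — 3 statements merged into one kernel-verified Lean document; each statement's English description precedes it below -/
import Mathlib

section
/- Let \Phi : E_1 \times \cdots \times E_K \to F be a multilinear map between finite-dimensional real inner product spaces, f : F \to \mathbb{R} differentiable, and let g_k denote the gradient of (G_1,...,G_K) \mapsto f(\Phi(G_1,...,G_K)) with respect to G_k. Then for all indices i, j, the inner product \langle G_i, g_i \rangle equals \langle G_j, g_j \rangle; both equal \langle \Phi(G_1,...,G_K), \nabla f(\Phi(G_1,...,G_K)) \rangle. -/
open RealInnerProductSpace

theorem core_gradient_inner_products_equal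
    {K : ℕ} {E : Fin K → Type*}
    [∀ k, NormedAddCommGroup (E k)] [∀ k, InnerProductSpace ℝ (E k)]
    [∀ k, FiniteDimensional ℝ (E k)]
    {F : Type*} [NormedAddCommGroup F] [InnerProductSpace ℝ F] [FiniteDimensional ℝ F]
    (Φ : ContinuousMultilinearMap ℝ E F) (f : F → ℝ) (hf : Differentiable ℝ f)
    (G : ∀ k, E k)
    (g : ∀ k, E k)
    (hg : ∀ k, g k = gradient (fun X : E k => f (Φ (Function.update G k X))) (G k)) :
    (∀ i j, ⟪G i, g i⟫ = ⟪G j, g j⟫) ∧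
    (∀ i, ⟪G i, g i⟫ = ⟪Φ G, gradient f (Φ G)⟫) := by
  have key : ∀ k, ⟪G k, g k⟫ = ⟪Φ G, gradient f (Φ G)⟫ := by
    intro k
    have hL : HasFDerivAt (fun X : E k => Φ (Function.update G k X))
        (Φ.toContinuousLinearMap G k) (G k) :=
      (Φ.toContinuousLinearMap G k).hasFDerivAt
    have hcomp : HasFDerivAt (fun X : E k => f (Φ (Function.update G k X)))
        ((fderiv ℝ f (Φ G)).comp (Φ.toContinuousLinearMap G k)) (G k) := by
      have h : Φ (Function.update G k (G k)) = Φ G := by rw [Function.update_eq_self]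
      exact HasFDerivAt.comp (G k) (h ▸ (hf (Φ G)).hasFDerivAt) hL
    have h1 : ⟪G k, g k⟫ = fderiv ℝ f (Φ G) (Φ G) := by
      rw [hg k, real_inner_comm, gradient, InnerProductSpace.toDual_symm_apply,
        hcomp.fderiv]
      simp [Function.update_eq_self]
    have h2 : ⟪Φ G, gradient f (Φ G)⟫ = fderiv ℝ f (Φ G) (Φ G) := by
      rw [real_inner_comm, gradient, InnerProductSpace.toDual_symm_apply]
    rw [h1, h2]
  exact ⟨fun i j => (key i).trans (key j).symm, key⟩
end

section
/- Let G_k : \mathbb{R} \to E_k for k = 1,...,K be differentiable curves in finite-dimensional inner product spaces satisfying the gradient flow G_k'(t) = -g_k(t), where g_k(t) is the gradient with respect to G_k of f(\Phi(G_1(t),...,G_K(t))) for a multilinear map \Phi and differentiable f. Then for all k, j and all t, d/dt \|G_k(t)\|^2 = d/dt \|G_j(t)\|^2, and both equal -2\langle \Phi(G_1(t),...,G_K(t)), \nabla f(\Phi(G_1(t),...,G_K(t))) \rangle. -/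
open RealInnerProductSpace

lemma grad_inner_eq {E : Type*} [NormedAddCommGroup E] [InnerProductSpace ℝ E]
    [CompleteSpace E] {g : E → ℝ} {x : E} (hg : DifferentiableAt ℝ g x) (v : E) :
    ⟪gradient g x, v⟫ = fderiv ℝ g x v := by
  have h := hg.hasGradientAt
  rw [hasGradientAt_iff_hasFDerivAt] at h
  rw [h.fderiv, InnerProductSpace.toDual_apply_apply]

theorem sgd_norm_dynamics
    {K : ℕ} {E : Fin K → Type*}
    [∀ k, NormedAddCommGroup (E k)] [∀ k, InnerProductSpace ℝ (E k)]
    [∀ k, FiniteDimensional ℝ (E k)]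
    {F : Type*} [NormedAddCommGroup F] [InnerProductSpace ℝ F] [FiniteDimensional ℝ F]
    (Φ : ContinuousMultilinearMap ℝ E F) (f : F → ℝ) (hf : Differentiable ℝ f)
    (G : ∀ k, ℝ → E k)
    (hflow : ∀ k t, HasDerivAt (G k)
      (-(gradient (fun X : E k => f (Φ (Function.update (fun j => G j t) k X))) (G k t))) t) :
    ∀ k j t,
      deriv (fun s => ‖G k s‖ ^ 2) t = deriv (fun s => ‖G j s‖ ^ 2) t ∧
      deriv (fun s => ‖G k s‖ ^ 2) t
        = -2 * ⟪Φ (fun i => G i t), gradient f (Φ (fun i => G i t))⟫ := by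
  have key : ∀ k t, deriv (fun s => ‖G k s‖ ^ 2) t
      = -2 * ⟪Φ (fun i => G i t), gradient f (Φ (fun i => G i t))⟫ := by
    intro k t
    set L : E k →L[ℝ] F := Φ.toContinuousLinearMap (fun j => G j t) k with hLdef
    have hLapp : ∀ X, L X = Φ (Function.update (fun j => G j t) k X) := fun X => rfl
    have hLx : L (G k t) = Φ (fun i => G i t) := by
      rw [hLapp, Function.update_eq_self]
    -- differentiability of the inner function
    have hg : DifferentiableAt ℝ
        (fun X : E k => f (Φ (Function.update (fun j => G j t) k X))) (G k t) := by
      have : (fun X : E k => f (Φ (Function.update (fun j => G j t) k X))) = f ∘ L := rfl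
      rw [this]
      exact (hf.differentiableAt).comp _ L.differentiableAt
    -- the key inner product identity
    have hinner : ⟪G k t,
        gradient (fun X : E k => f (Φ (Function.update (fun j => G j t) k X))) (G k t)⟫
        = ⟪Φ (fun i => G i t), gradient f (Φ (fun i => G i t))⟫ := by
      rw [real_inner_comm, grad_inner_eq hg]
      have hcomp : (fun X : E k => f (Φ (Function.update (fun j => G j t) k X))) = f ∘ L := rfl
      rw [hcomp, fderiv_comp _ (hf.differentiableAt) L.differentiableAt, L.fderiv]
      simp only [ContinuousLinearMap.coe_comp', Function.comp_apply]
      rw [hLx, ← grad_inner_eq (hf.differentiableAt), real_inner_comm]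
    -- derivative of the squared norm
    have hD := hflow k t
    have hsq : HasDerivAt (fun s => ‖G k s‖ ^ 2)
        (-2 * ⟪Φ (fun i => G i t), gradient f (Φ (fun i => G i t))⟫) t := by
      have h1 := hD.inner ℝ hD
      have h2 : (fun s => ⟪G k s, G k s⟫ : ℝ → ℝ) = fun s => ‖G k s‖ ^ 2 := by
        funext s; rw [real_inner_self_eq_norm_sq]
      rw [h2] at h1
      refine HasDerivAt.congr_deriv h1 (Eq.symm ?_)
      simp only [inner_neg_left, inner_neg_right]
      linear_combination 2 * hinner + real_inner_comm (G k t)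
        (gradient (fun X : E k => f (Φ (Function.update (fun j => G j t) k X))) (G k t))
    exact hsq.deriv
  intro k j t
  exact ⟨(key k t).trans (key j t).symm, key k t⟩
end

section
/- Under the gradient flow G_k'(t) = -g_k(t) of a scale-invariant multilinear objective (as in Theorem 1), the Norm Deviation Q(t) := \sum_{k=1}^K (\|G_k(t)\|^2 - (1/K)\sum_i \|G_i(t)\|^2)^2 is constant in time: dQ/dt = 0. -/
open Finset

theorem sgd_conserves_norm_deviation
    {K : ℕ} {E : Fin K → Type*}
    [∀ k, NormedAddCommGroup (E k)] [∀ k, InnerProductSpace ℝ (E k)]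
    [∀ k, FiniteDimensional ℝ (E k)]
    {F : Type*} [NormedAddCommGroup F] [InnerProductSpace ℝ F] [FiniteDimensional ℝ F]
    (Φ : ContinuousMultilinearMap ℝ E F) (f : F → ℝ) (hf : Differentiable ℝ f)
    (G : ∀ k, ℝ → E k)
    (hflow : ∀ k t, HasDerivAt (G k)
      (-(gradient (fun X : E k => f (Φ (Function.update (fun j => G j t) k X))) (G k t))) t) :
    ∀ t, deriv (fun s =>
      ∑ k, (‖G k s‖ ^ 2 - (1 / (K : ℝ)) * ∑ i, ‖G i s‖ ^ 2) ^ 2) t = 0 := by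
  intro t
  rcases Nat.eq_zero_or_pos K with hK | hK
  · subst hK; simp
  set m : ∀ j, E j := fun j => G j t with hm
  set c : ℝ := -2 * fderiv ℝ f (Φ m) (Φ m) with hc
  -- each squared norm has the same derivative c
  have hN : ∀ k, HasDerivAt (fun s => ‖G k s‖ ^ 2) c t := by
    intro k
    set L : E k →L[ℝ] F := Φ.toContinuousLinearMap m k with hL
    have hLapp : ∀ X, L X = Φ (Function.update m k X) := fun X => rfl
    set φ : E k → ℝ := fun X => f (Φ (Function.update m k X)) with hφ
    -- fderiv of φ at G k t
    have hmk : Function.update m k (G k t) = m := by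
      funext j; by_cases h : j = k
      · subst h; simp [hm]
      · simp [Function.update_of_ne h]
    have hφF : HasFDerivAt φ ((fderiv ℝ f (Φ m)).comp L) (G k t) := by
      have h1 : HasFDerivAt L L (G k t) := L.hasFDerivAt
      have h2 : HasFDerivAt f (fderiv ℝ f (Φ m)) (L (G k t)) := by
        have : L (G k t) = Φ m := by rw [hLapp, hmk]
        rw [this]; exact (hf (Φ m)).hasFDerivAt
      exact h2.comp (G k t) h1
    -- identify the gradient pairing
    have hgradF : HasFDerivAt φ
        ((InnerProductSpace.toDual ℝ (E k)) (gradient φ (G k t))) (G k t) :=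
      (hφF.differentiableAt.hasGradientAt).hasFDerivAt
    have hdual : (InnerProductSpace.toDual ℝ (E k)) (gradient φ (G k t))
        = (fderiv ℝ f (Φ m)).comp L := hgradF.unique hφF
    have hpair : @inner ℝ _ _ (gradient φ (G k t)) (G k t)
        = fderiv ℝ f (Φ m) (Φ m) := by
      have := congrArg (fun (T : E k →L[ℝ] ℝ) => T (G k t)) hdual
      simp only [InnerProductSpace.toDual_apply_apply, ContinuousLinearMap.comp_apply] at this
      rw [this, hLapp, hmk]
    -- derivative of inner product
    have hG := hflow k t
    have hin := (hG.inner ℝ hG :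
      HasDerivAt (fun s => @inner ℝ _ _ (G k s) (G k s)) _ t)
    have hval : (@inner ℝ _ _ (G k t) (-(gradient φ (G k t)))
        + @inner ℝ _ _ (-(gradient φ (G k t))) (G k t)) = c := by
      have h2 : @inner ℝ _ _ (G k t) (gradient φ (G k t))
          = fderiv ℝ f (Φ m) (Φ m) := by rw [real_inner_comm]; exact hpair
      simp only [inner_neg_left, inner_neg_right, h2, hpair, hc]; ring
    have hin' : HasDerivAt (fun s => @inner ℝ _ _ (G k s) (G k s)) c t := hval ▸ hin
    have : (fun s => @inner ℝ _ _ (G k s) (G k s)) = fun s => ‖G k s‖ ^ 2 := by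
      funext s; exact real_inner_self_eq_norm_sq _
    rwa [this] at hin'
  -- derivative of the mean term
  have hS : HasDerivAt (fun s => ∑ i, ‖G i s‖ ^ 2) ((K : ℝ) * c) t := by
    have := HasDerivAt.fun_sum (fun i (_ : i ∈ Finset.univ) => hN i)
    simpa [Finset.sum_const, nsmul_eq_mul] using this
  -- each summand has zero derivative
  have hterm : ∀ k, HasDerivAt
      (fun s => (‖G k s‖ ^ 2 - (1 / (K : ℝ)) * ∑ i, ‖G i s‖ ^ 2) ^ 2) 0 t := by
    intro k
    have h1 : HasDerivAt (fun s => ‖G k s‖ ^ 2 - (1 / (K : ℝ)) * ∑ i, ‖G i s‖ ^ 2)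
        (c - (1 / (K : ℝ)) * ((K : ℝ) * c)) t := (hN k).sub (hS.const_mul _)
    have hz : c - (1 / (K : ℝ)) * ((K : ℝ) * c) = 0 := by
      have : (K : ℝ) ≠ 0 := Nat.cast_ne_zero.mpr hK.ne'
      field_simp
      ring
    rw [hz] at h1
    have := h1.fun_pow 2
    simpa using this
  have hsum : HasDerivAt (fun s =>
      ∑ k, (‖G k s‖ ^ 2 - (1 / (K : ℝ)) * ∑ i, ‖G i s‖ ^ 2) ^ 2) 0 t := by
    have := HasDerivAt.fun_sum (fun k (_ : k ∈ Finset.univ) => hterm k)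
    simpa using this
  exact hsum.deriv
end
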